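/- In the Weyl-group setting above, if γ ∈ ker(w + w^Δ), then −2·w^Δ(γ) = Σ_{h=1}^m u_h(γ) = −Σ_{h=1}^m ⟨(β^Δ_{j_h})∨, w^Δ(γ)⟩ · β_{j_h}. Consequently γ = (1/2)(w^Δ)^{−1}(Σ_{h=1}^m ⟨(β^Δ_{j_h})∨, w^Δ(γ)⟩ β_{j_h}). -/

import Mathlib

open scoped RealInnerProductSpace

/-- `pref w s ℓ = w₀ s₁ w₁ ⋯ s_ℓ w_ℓ` (composition of endomorphisms). -/
def pref {V : Type*} [NormedAddCommGroup V] [InnerProductSpace ℝ V]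
    (w s : ℕ → Module.End ℝ V) : ℕ → Module.End ℝ V
  | 0 => w 0
  | ℓ + 1 => pref w s ℓ * s (ℓ + 1) * w (ℓ + 1)

/-- `plainPref w ℓ = w₀ w₁ ⋯ w_ℓ`. -/
def plainPref {V : Type*} [NormedAddCommGroup V] [InnerProductSpace ℝ V]
    (w : ℕ → Module.End ℝ V) : ℕ → Module.End ℝ V
  | 0 => w 0
  | ℓ + 1 => plainPref w ℓ * w (ℓ + 1)

/-- `suff w m ℓ = w_ℓ w_{ℓ+1} ⋯ w_m`. -/
def suff {V : Type*} [NormedAddCommGroup V] [InnerProductSpace ℝ V]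
    (w : ℕ → Module.End ℝ V) (m ℓ : ℕ) : Module.End ℝ V :=
  ((List.range (m + 1 - ℓ)).map fun i => w (ℓ + i)).prod

/-- `uop w s m ℓ = w₀ s₁ w₁ ⋯ w_{ℓ-1} (s_ℓ - id) w_ℓ ⋯ w_m`. -/
def uop {V : Type*} [NormedAddCommGroup V] [InnerProductSpace ℝ V]
    (w s : ℕ → Module.End ℝ V) (m ℓ : ℕ) : Module.End ℝ V :=
  pref w s (ℓ - 1) * (s ℓ - 1) * suff w m ℓ

/-- `vop w s m ℓ = w₀ s₁ w₁ ⋯ w_{ℓ-1} (s_ℓ + id) w_ℓ ⋯ w_m`. -/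
def vop {V : Type*} [NormedAddCommGroup V] [InnerProductSpace ℝ V]
    (w s : ℕ → Module.End ℝ V) (m ℓ : ℕ) : Module.End ℝ V :=
  pref w s (ℓ - 1) * (s ℓ + 1) * suff w m ℓ

/-- `β_{j_ℓ} = w₀ s₁ w₁ ⋯ s_{ℓ-1} w_{ℓ-1} (α_{j_ℓ})`. -/
def betaV {V : Type*} [NormedAddCommGroup V] [InnerProductSpace ℝ V]
    (w s : ℕ → Module.End ℝ V) (α : ℕ → V) (ℓ : ℕ) : V :=
  pref w s (ℓ - 1) (α ℓ)

/-- `β^Δ_{j_ℓ} = w₀ w₁ ⋯ w_{ℓ-1} (α_{j_ℓ})`. -/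
def betaD {V : Type*} [NormedAddCommGroup V] [InnerProductSpace ℝ V]
    (w : ℕ → Module.End ℝ V) (α : ℕ → V) (ℓ : ℕ) : V :=
  plainPref w (ℓ - 1) (α ℓ)

/-- `⟨(β^Δ_{j_ℓ})∨, w^Δ(γ)⟩` where `β∨ = (2/⟨β,β⟩)β`. -/
noncomputable def coeffc {V : Type*} [NormedAddCommGroup V] [InnerProductSpace ℝ V]
    (w s : ℕ → Module.End ℝ V) (α : ℕ → V) (m : ℕ) (γ : V) (ℓ : ℕ) : ℝ :=
  (2 / ⟪betaD w α ℓ, betaD w α ℓ⟫) * ⟪betaD w α ℓ, plainPref w m γ⟫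

/-! The operators `u_h` telescope: with `P_h = w₀ s₁ ⋯ s_h w_h · w_{h+1} ⋯ w_m` we have
`u_h = P_h - P_{h-1}`, so `∑ u_h = w - w^Δ`, which is `-2 w^Δ` on `ker (w + w^Δ)`. Each `u_h γ` is the
prefix `w₀ s₁ ⋯ w_{h-1}` applied to `(s_h - 1)(w_h ⋯ w_m γ)`, a multiple of `α_h`; the multiple is
`⟨(β^Δ)∨, w^Δ γ⟩` because the isometry `w₀ ⋯ w_{h-1}` carries `α_h` to `β^Δ` and `w_h ⋯ w_m γ` to
`w^Δ γ`. -/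

section

variable {V : Type*} [NormedAddCommGroup V] [InnerProductSpace ℝ V] (w : ℕ → Module.End ℝ V)

lemma suff_eq_mul_suff_succ {m ℓ : ℕ} (h : ℓ ≤ m) : suff w m ℓ = w ℓ * suff w m (ℓ + 1) := by
  rw [suff, suff, show m + 1 - ℓ = m - ℓ + 1 by omega, show m + 1 - (ℓ + 1) = m - ℓ by omega,
    List.range_succ_eq_map, List.map_cons, List.prod_cons, List.map_map]
  simp only [Function.comp_def, Nat.succ_eq_add_one, add_zero, add_assoc, add_comm 1]

@[simp]
lemma suff_succ_self (m : ℕ) : suff w m (m + 1) = 1 := by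
  simp [suff]

lemma plainPref_mul_suff_succ {m ℓ : ℕ} (h : ℓ ≤ m) :
    plainPref w ℓ * suff w m (ℓ + 1) = plainPref w m := by
  refine Nat.decreasingInduction (motive := fun ℓ _ => plainPref w ℓ * suff w m (ℓ + 1) =
    plainPref w m) (fun k hk ih => ?_) (by simp) h
  rw [suff_eq_mul_suff_succ w hk, ← mul_assoc, ← ih]
  rfl

lemma plainPref_apply_eq_plainPref_apply_suff {m ℓ : ℕ} (h₁ : 1 ≤ ℓ) (h₂ : ℓ ≤ m) (v : V) :
    plainPref w m v = plainPref w (ℓ - 1) (suff w m ℓ v) := by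
  rw [← plainPref_mul_suff_succ w (show ℓ - 1 ≤ m by omega), Nat.sub_add_cancel h₁,
    Module.End.mul_apply]

lemma inner_plainPref_plainPref (hw : ∀ i (x y : V), ⟪w i x, w i y⟫ = ⟪x, y⟫) (ℓ : ℕ) (x y : V) :
    ⟪plainPref w ℓ x, plainPref w ℓ y⟫ = ⟪x, y⟫ := by
  induction ℓ generalizing x y with
  | zero => exact hw 0 x y
  | succ ℓ ih => exact (ih _ _).trans (hw _ x y)

lemma uop_eq_sub (s : ℕ → Module.End ℝ V) {m ℓ : ℕ} (h₁ : 1 ≤ ℓ) (h₂ : ℓ ≤ m) :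
    uop w s m ℓ = pref w s ℓ * suff w m (ℓ + 1) - pref w s (ℓ - 1) * suff w m ℓ := by
  obtain ⟨k, rfl⟩ : ∃ k, ℓ = k + 1 := ⟨ℓ - 1, by omega⟩
  rw [uop, suff_eq_mul_suff_succ w h₂, Nat.add_sub_cancel, pref]
  noncomm_ring

lemma sum_uop (s : ℕ → Module.End ℝ V) (m : ℕ) :
    ∑ h ∈ Finset.Icc 1 m, uop w s m h = pref w s m - plainPref w m := by
  let F : ℕ → Module.End ℝ V := fun j => pref w s (j - 1) * suff w m j
  calc ∑ h ∈ Finset.Icc 1 m, uop w s m h = ∑ h ∈ Finset.Ico 1 (m + 1), (F (h + 1) - F h) := by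
        rw [← Finset.Ico_add_one_right_eq_Icc]
        refine Finset.sum_congr rfl fun h hh => ?_
        obtain ⟨h₁, h₂⟩ := Finset.mem_Ico.mp hh
        simp only [F, Nat.add_sub_cancel]
        exact uop_eq_sub w s h₁ (by omega)
    _ = pref w s m - plainPref w m := by
        rw [Finset.sum_Ico_sub F (by omega)]
        simp only [F, Nat.add_sub_cancel, suff_succ_self, mul_one, Nat.sub_self]
        rw [← plainPref_mul_suff_succ w (Nat.zero_le m)]
        rfl

lemma reflection_sub_id_apply {s : Module.End ℝ V} {α : V}
    (hs : ∀ v, s v = v - ((2 * ⟪α, v⟫) / ⟪α, α⟫) • α) (v : V) :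
    (s - 1) v = -(((2 * ⟪α, v⟫) / ⟪α, α⟫) • α) := by
  rw [LinearMap.sub_apply, hs, Module.End.one_apply, sub_sub_cancel_left]

lemma uop_apply {m ℓ : ℕ} (s : ℕ → Module.End ℝ V) (α : ℕ → V)
    (hw : ∀ i (x y : V), ⟪w i x, w i y⟫ = ⟪x, y⟫)
    (hs : ∀ ℓ (v : V), s ℓ v = v - ((2 * ⟪α ℓ, v⟫) / ⟪α ℓ, α ℓ⟫) • α ℓ)
    (h₁ : 1 ≤ ℓ) (h₂ : ℓ ≤ m) (γ : V) :
    uop w s m ℓ γ = -(coeffc w s α m γ ℓ • betaV w s α ℓ) := by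
  have hcoeff : coeffc w s α m γ ℓ = 2 * ⟪α ℓ, suff w m ℓ γ⟫ / ⟪α ℓ, α ℓ⟫ := by
    rw [coeffc, betaD, plainPref_apply_eq_plainPref_apply_suff w h₁ h₂,
      inner_plainPref_plainPref w hw, inner_plainPref_plainPref w hw]
    ring
  rw [uop, Module.End.mul_apply, Module.End.mul_apply, reflection_sub_id_apply (hs ℓ), map_neg,
    map_smul, hcoeff, betaV]

end

theorem gamma_recovered_from_coeffs_general
    {V : Type*} [NormedAddCommGroup V] [InnerProductSpace ℝ V]
    (m : ℕ) (w s : ℕ → Module.End ℝ V) (α : ℕ → V)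
    (hw : ∀ i (x y : V), ⟪w i x, w i y⟫ = ⟪x, y⟫)
    (hs : ∀ ℓ (v : V), s ℓ v = v - ((2 * ⟪α ℓ, v⟫) / ⟪α ℓ, α ℓ⟫) • α ℓ)
    (wΔinv : Module.End ℝ V)
    (hinv : wΔinv * plainPref w m = 1 ∧ plainPref w m * wΔinv = 1)
    (γ : V) (hγ : (pref w s m + plainPref w m) γ = 0) :
    (-(2 : ℝ)) • plainPref w m γ = ∑ h ∈ Finset.Icc 1 m, uop w s m h γ ∧
      (∑ h ∈ Finset.Icc 1 m, uop w s m h γ =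
        -∑ h ∈ Finset.Icc 1 m, coeffc w s α m γ h • betaV w s α h) ∧
      γ = (1 / 2 : ℝ) •
        wΔinv (∑ h ∈ Finset.Icc 1 m, coeffc w s α m γ h • betaV w s α h) := by
  set S := ∑ h ∈ Finset.Icc 1 m, coeffc w s α m γ h • betaV w s α h
  have hwγ : pref w s m γ = -plainPref w m γ := eq_neg_of_add_eq_zero_left hγ
  have hu : ∑ h ∈ Finset.Icc 1 m, uop w s m h γ = (-(2 : ℝ)) • plainPref w m γ := by
    rw [← LinearMap.sum_apply, sum_uop, LinearMap.sub_apply, hwγ, neg_smul, two_smul, neg_add]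
    abel
  have hS : ∑ h ∈ Finset.Icc 1 m, uop w s m h γ = -S := by
    rw [← Finset.sum_neg_distrib]
    exact Finset.sum_congr rfl fun h hh =>
      uop_apply w s α hw hs (Finset.mem_Icc.mp hh).1 (Finset.mem_Icc.mp hh).2 γ
  have hwΔγ : plainPref w m γ = (1 / 2 : ℝ) • S := by
    calc plainPref w m γ = (-(1 / 2) : ℝ) • ((-(2 : ℝ)) • plainPref w m γ) := by
          rw [smul_smul]; norm_num
      _ = (1 / 2 : ℝ) • S := by rw [← hu, hS, smul_neg, neg_smul, neg_neg]
  refine ⟨hu.symm, hS, ?_⟩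
  rw [← map_smul, ← hwΔγ, ← Module.End.mul_apply, hinv.1, Module.End.one_apply]

theorem gamma_recovered_from_coeffs
    {V : Type*} [NormedAddCommGroup V] [InnerProductSpace ℝ V] [FiniteDimensional ℝ V]
    (m : ℕ) (w s : ℕ → Module.End ℝ V) (α : ℕ → V)
    (hα : ∀ ℓ, α ℓ ≠ 0)
    (hw : ∀ i (x y : V), ⟪w i x, w i y⟫ = ⟪x, y⟫)
    (hs : ∀ ℓ (v : V), s ℓ v = v - ((2 * ⟪α ℓ, v⟫) / ⟪α ℓ, α ℓ⟫) • α ℓ)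
    (wΔinv : Module.End ℝ V)
    (hinv : wΔinv * plainPref w m = 1 ∧ plainPref w m * wΔinv = 1)
    (γ : V) (hγ : (pref w s m + plainPref w m) γ = 0) :
    (-(2 : ℝ)) • plainPref w m γ = ∑ h ∈ Finset.Icc 1 m, uop w s m h γ ∧
      (∑ h ∈ Finset.Icc 1 m, uop w s m h γ =
        -∑ h ∈ Finset.Icc 1 m, coeffc w s α m γ h • betaV w s α h) ∧
      γ = (1 / 2 : ℝ) •
        wΔinv (∑ h ∈ Finset.Icc 1 m, coeffc w s α m γ h • betaV w s α h) :=
  gamma_recovered_from_coeffs_general m w s α hw hs wΔinv hinv γ hγ
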